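/- The function λ_{sph} is strictly decreasing on (x_{ph}, x_{ms}) and strictly increasing on (x_{ms}, ∞), with λ_{sph}(x) → ∞ both as x → x_{ph}⁺ and as x → ∞; likewise ε_{sph} is strictly decreasing on (x_{ph}, x_{ms}) and strictly increasing on (x_{ms}, ∞), with ε_{sph}(x) → ∞ as x → x_{ph}⁺ and ε_{sph}(x) → 1 as x → ∞. In particular λ_{ms} := λ_{sph}(x_{ms}) and ε_{ms} := ε_{sph}(x_{ms}) are the global minima of these functions on (x_{ph}, ∞), and ε_{sph}(x) < 1 for all x > x_{ms}. -/

import Mathlib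

open Real Filter Topology Set

noncomputable section

/-- `h(x) = x(x−3) + 2α²(1−β²) + 2αβ√(x − α²(1−β²))`. -/
def hfun (α β x : ℝ) : ℝ :=
  x * (x - 3) + 2 * α ^ 2 * (1 - β ^ 2) + 2 * α * β * Real.sqrt (x - α ^ 2 * (1 - β ^ 2))

/-- `G(x) = x·Δ̄(x) − [h(x) − x(x−1)]²`, with `Δ̄(x) = x² − 2x + α²`. -/
def Gfun (α β x : ℝ) : ℝ :=
  x * (x ^ 2 - 2 * x + α ^ 2) - (hfun α β x - x * (x - 1)) ^ 2

/-- The effective potential `w_{α,β,λ}(x) = αβλ/x² + √(Δ̄(x)(1 + λ²/x²))`. -/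
def wfun (α β lam x : ℝ) : ℝ :=
  α * β * lam / x ^ 2 + Real.sqrt ((x ^ 2 - 2 * x + α ^ 2) * (1 + lam ^ 2 / x ^ 2))

/-- `λ_{sph}(x) = x(√(x − α²(1−β²)) − αβ)/√(h(x))`. -/
def lamsph (α β x : ℝ) : ℝ :=
  x * (Real.sqrt (x - α ^ 2 * (1 - β ^ 2)) - α * β) / Real.sqrt (hfun α β x)

/-- `ε_{sph}(x) = (x² − 2x + α²(1−β²) + αβ√(x − α²(1−β²)))/(x√(h(x)))`. -/
def epssph (α β x : ℝ) : ℝ :=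
  (x ^ 2 - 2 * x + α ^ 2 * (1 - β ^ 2) + α * β * Real.sqrt (x - α ^ 2 * (1 - β ^ 2))) /
    (x * Real.sqrt (hfun α β x))

/-! With `s = √(x − α²(1−β²))`, both `λ_sph` and `ε_sph` have the form `N(x)/√h(x)`, where
`N(x) = x(s − αβ)`, resp. `N(x) = (h(x) + x(x−1))/(2x)`, is positive at `x_ph`.  Differentiating
and substituting `x = s² + α²(1−β²)` gives `λ_sph' = G/(2 s h^{3/2})` and
`ε_sph' = G/(2 x² h^{3/2})`, so both derivatives have the sign of `G`, which changes from negative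
to positive at `x_ms`.  The blow-up at `x_ph⁺` comes from `h(x_ph) = 0`, and the behaviour at
infinity from `h(x)/x² → 1`. -/

theorem HasDerivAt.div_sqrt {f g : ℝ → ℝ} {f' g' x : ℝ} (hf : HasDerivAt f f' x)
    (hg : HasDerivAt g g' x) (hx : 0 < g x) :
    HasDerivAt (fun y => f y / √(g y)) ((2 * g x * f' - f x * g') / (2 * √(g x) ^ 3)) x := by
  have hs : 0 < √(g x) := sqrt_pos.2 hx
  refine (hf.div (hg.sqrt hx.ne') hs.ne').congr_deriv ?_
  field_simp
  rw [sq_sqrt hx.le]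
  ring

theorem hasDerivAt_sqrt_sub_const {c x : ℝ} (hx : c < x) :
    HasDerivAt (fun y => √(y - c)) (1 / (2 * √(x - c))) x := by
  simpa using ((hasDerivAt_id x).sub_const c).sqrt (sub_pos.2 hx).ne'

theorem strictAntiOn_Ioc_and_strictMonoOn_Ici_of_hasDerivAt {f g : ℝ → ℝ} {a m : ℝ}
    (hf : ∀ x, a < x → ∃ w > 0, HasDerivAt f (g x / w) x)
    (hneg : ∀ x, a < x → x < m → g x < 0) (hpos : ∀ x, m < x → 0 < g x) (ham : a < m) :
    StrictAntiOn f (Ioc a m) ∧ StrictMonoOn f (Ici m) := by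
  choose! w hw hfw using hf
  have hcont (s : Set ℝ) (hs : s ⊆ Ioi a) : ContinuousOn f s := fun x hx =>
    (hfw x (hs hx)).continuousAt.continuousWithinAt
  constructor
  · refine strictAntiOn_of_deriv_neg (convex_Ioc a m) (hcont _ Ioc_subset_Ioi_self) fun x hx => ?_
    rw [interior_Ioc] at hx
    rw [(hfw x hx.1).deriv]
    exact div_neg_of_neg_of_pos (hneg x hx.1 hx.2) (hw x hx.1)
  · refine strictMonoOn_of_deriv_pos (convex_Ici m)
      (hcont _ fun x hx => ham.trans_le hx) fun x hx => ?_
    rw [interior_Ici] at hx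
    rw [(hfw x (ham.trans hx)).deriv]
    exact div_pos (hpos x hx) (hw x (ham.trans hx))

theorem isMinOn_Ioi_of_strictAntiOn_Ioc_of_strictMonoOn_Ici {f : ℝ → ℝ} {a m : ℝ}
    (hanti : StrictAntiOn f (Ioc a m)) (hmono : StrictMonoOn f (Ici m)) (ham : a < m) :
    IsMinOn f (Ioi a) m := by
  refine isMinOn_iff.2 fun x (hx : a < x) => ?_
  rcases le_total x m with hxm | hmx
  · exact hanti.antitoneOn ⟨hx, hxm⟩ ⟨ham, le_rfl⟩ hxm
  · exact hmono.monotoneOn self_mem_Ici hmx hmx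

theorem StrictMonoOn.lt_of_tendsto_atTop {f : ℝ → ℝ} {m L x : ℝ} (hf : StrictMonoOn f (Ici m))
    (hL : Tendsto f atTop (𝓝 L)) (hx : m ≤ x) : f x < L := by
  have hle : f (x + 1) ≤ L := ge_of_tendsto hL <| by
    filter_upwards [eventually_ge_atTop (x + 1)] with y hy
    exact hf.monotoneOn (mem_Ici.2 (by linarith)) (mem_Ici.2 (by linarith)) hy
  exact (hf hx (mem_Ici.2 (by linarith)) (lt_add_one x)).trans_le hle

section

variable {α β x : ℝ}

theorem sub_sq_mul_one_sub_sq_pos (hx : α ^ 2 < x) : 0 < x - α ^ 2 * (1 - β ^ 2) := by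
  nlinarith [sq_nonneg (α * β)]

theorem mul_lt_sqrt_sub_sq_mul_one_sub_sq (hx : α ^ 2 < x) :
    α * β < √(x - α ^ 2 * (1 - β ^ 2)) := by
  refine (le_abs_self _).trans_lt (abs_lt_of_sq_lt_sq ?_ (sqrt_nonneg _))
  rw [sq_sqrt (sub_sq_mul_one_sub_sq_pos hx).le]
  nlinarith

@[fun_prop]
theorem continuous_hfun : Continuous (hfun α β) := by
  unfold hfun
  fun_prop

theorem hasDerivAt_hfun (hx : α ^ 2 < x) :
    HasDerivAt (hfun α β) (2 * x - 3 + α * β / √(x - α ^ 2 * (1 - β ^ 2))) x := by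
  have hs := hasDerivAt_sqrt_sub_const (sub_pos.1 (sub_sq_mul_one_sub_sq_pos (β := β) hx))
  refine ((((hasDerivAt_id' x).mul ((hasDerivAt_id' x).sub_const 3)).add_const
    (2 * α ^ 2 * (1 - β ^ 2))).add (hs.const_mul (2 * α * β))).congr_deriv ?_
  field_simp
  ring

theorem epssph_eq_div_sqrt_hfun :
    epssph α β = fun x => (hfun α β x + x * (x - 1)) / (2 * x) / √(hfun α β x) := by
  ext x
  rw [epssph, hfun]
  ring

theorem exists_pos_hasDerivAt_lamsph (hx : α ^ 2 < x) (hh : 0 < hfun α β x) :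
    ∃ w > 0, HasDerivAt (lamsph α β) (Gfun α β x / w) x := by
  have hu := sub_sq_mul_one_sub_sq_pos (β := β) hx
  set s := √(x - α ^ 2 * (1 - β ^ 2)) with hs_def
  have hs : 0 < s := sqrt_pos.2 hu
  have hxs : x = s ^ 2 + α ^ 2 * (1 - β ^ 2) := by rw [sq_sqrt hu.le]; ring
  have hG : 2 * hfun α β x * (s - α * β + x / (2 * s))
      - x * (s - α * β) * (2 * x - 3 + α * β / s) = Gfun α β x / s := by
    rw [Gfun, hfun, ← hs_def]
    clear_value s
    subst hxs
    field_simp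
    ring
  refine ⟨2 * s * √(hfun α β x) ^ 3, by positivity, ?_⟩
  refine (((hasDerivAt_id' x).mul ((hasDerivAt_sqrt_sub_const (sub_pos.1 hu)).sub_const
    (α * β))).div_sqrt (hasDerivAt_hfun hx) hh).congr_deriv ?_
  simp only [Pi.mul_apply, one_mul, mul_one_div, ← hs_def, hG]
  ring

theorem exists_pos_hasDerivAt_epssph (hx0 : 0 < x) (hx : α ^ 2 < x) (hh : 0 < hfun α β x) :
    ∃ w > 0, HasDerivAt (epssph α β) (Gfun α β x / w) x := by
  have hu := sub_sq_mul_one_sub_sq_pos (β := β) hx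
  set s := √(x - α ^ 2 * (1 - β ^ 2)) with hs_def
  have hs : 0 < s := sqrt_pos.2 hu
  have hxs : x = s ^ 2 + α ^ 2 * (1 - β ^ 2) := by rw [sq_sqrt hu.le]; ring
  have hN : HasDerivAt (fun y => (hfun α β y + y * (y - 1)) / (2 * y))
      ((x * (2 * x - 3 + α * β / s) + x ^ 2 - hfun α β x) / (2 * x ^ 2)) x := by
    refine (((hasDerivAt_hfun hx).add ((hasDerivAt_id' x).mul ((hasDerivAt_id' x).sub_const 1))).div
      ((hasDerivAt_id' x).const_mul 2) (by positivity)).congr_deriv ?_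
    simp only [Pi.add_apply, Pi.mul_apply, ← hs_def]
    field_simp
    ring
  have hG : 2 * hfun α β x * ((x * (2 * x - 3 + α * β / s) + x ^ 2 - hfun α β x) / (2 * x ^ 2))
      - (hfun α β x + x * (x - 1)) / (2 * x) * (2 * x - 3 + α * β / s) = Gfun α β x / x ^ 2 := by
    rw [Gfun, hfun, ← hs_def]
    clear_value s
    subst hxs
    field_simp
    ring
  refine ⟨2 * x ^ 2 * √(hfun α β x) ^ 3, by positivity, ?_⟩
  rw [epssph_eq_div_sqrt_hfun]
  refine (hN.div_sqrt (hasDerivAt_hfun hx) hh).congr_deriv ?_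
  rw [← hs_def, hG]
  ring

theorem tendsto_div_sqrt_hfun_nhdsGT {xph : ℝ} (h0 : hfun α β xph = 0)
    (hpos : ∀ x, xph < x → 0 < hfun α β x) {N : ℝ → ℝ} (hN : ContinuousAt N xph)
    (hN0 : 0 < N xph) : Tendsto (fun x => N x / √(hfun α β x)) (𝓝[>] xph) atTop := by
  have hw : Tendsto (fun x => √(hfun α β x)) (𝓝[>] xph) (𝓝[>] 0) := by
    refine tendsto_nhdsWithin_of_tendsto_nhds_of_eventually_within _ ?_ ?_
    · have := ((continuous_sqrt.comp (continuous_hfun (α := α) (β := β))).tendsto xph).mono_left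
        (nhdsWithin_le_nhds (s := Ioi xph))
      simpa [Function.comp_def, h0] using this
    · filter_upwards [self_mem_nhdsWithin] with x hx using sqrt_pos.2 (hpos x hx)
  simpa only [div_eq_mul_inv, Pi.inv_apply] using
    hN.continuousWithinAt.tendsto.pos_mul_atTop hN0 hw.inv_tendsto_nhdsGT_zero

theorem tendsto_sqrt_sub_div_sq_atTop (c : ℝ) :
    Tendsto (fun x => √(x - c) / x ^ 2) atTop (𝓝 0) := by
  refine tendsto_of_tendsto_of_tendsto_of_le_of_le' tendsto_const_nhds tendsto_inv_atTop_zero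
    (Eventually.of_forall fun x => by positivity) ?_
  filter_upwards [eventually_ge_atTop (|c| + 1)] with x hx
  have hx0 : 0 < x := by linarith [abs_nonneg c]
  calc √(x - c) / x ^ 2 ≤ x / x ^ 2 := by
        gcongr
        exact sqrt_le_iff.2 ⟨hx0.le, by nlinarith [sq_nonneg (x - 1), neg_abs_le c]⟩
    _ = x⁻¹ := by field_simp

theorem tendsto_hfun_div_sq_atTop : Tendsto (fun x => hfun α β x / x ^ 2) atTop (𝓝 1) := by
  have h : Tendsto (fun x => 1 - 3 * x⁻¹ + 2 * α ^ 2 * (1 - β ^ 2) * x⁻¹ ^ 2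
      + 2 * α * β * (√(x - α ^ 2 * (1 - β ^ 2)) / x ^ 2)) atTop (𝓝 1) := by
    simpa using (((tendsto_const_nhds (x := (1 : ℝ))).sub (tendsto_inv_atTop_zero.const_mul 3)).add
      ((tendsto_inv_atTop_zero.pow 2).const_mul (2 * α ^ 2 * (1 - β ^ 2)))).add
      ((tendsto_sqrt_sub_div_sq_atTop (α ^ 2 * (1 - β ^ 2))).const_mul (2 * α * β))
  refine h.congr' ?_
  filter_upwards [eventually_ne_atTop 0] with x hx
  rw [hfun]
  field_simp

theorem tendsto_sqrt_hfun_div_atTop : Tendsto (fun x => √(hfun α β x) / x) atTop (𝓝 1) := by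
  have h := (continuous_sqrt.tendsto 1).comp (tendsto_hfun_div_sq_atTop (α := α) (β := β))
  rw [sqrt_one] at h
  refine h.congr' ?_
  filter_upwards [eventually_gt_atTop 0] with x hx
  simp [Function.comp, sqrt_div' _ (sq_nonneg x), sqrt_sq hx.le]

theorem tendsto_lamsph_atTop : Tendsto (lamsph α β) atTop atTop := by
  have hs : Tendsto (fun x => √(x - α ^ 2 * (1 - β ^ 2)) - α * β) atTop atTop :=
    tendsto_atTop_add_const_right _ _ <| tendsto_sqrt_atTop.comp <|
      tendsto_atTop_add_const_right _ _ tendsto_id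
  have hw := (tendsto_sqrt_hfun_div_atTop (α := α) (β := β)).inv₀ one_ne_zero
  rw [inv_one] at hw
  refine (hs.atTop_mul_pos one_pos hw).congr fun x => ?_
  rw [lamsph, inv_div]
  ring

theorem tendsto_epssph_atTop : Tendsto (epssph α β) atTop (𝓝 1) := by
  have h : Tendsto (fun x => (hfun α β x / x ^ 2 + 1 - x⁻¹) / (2 * (√(hfun α β x) / x))) atTop
      (𝓝 1) := by
    simpa [Pi.div_def] using (((tendsto_hfun_div_sq_atTop (α := α) (β := β)).add_const 1).sub
      tendsto_inv_atTop_zero).div ((tendsto_sqrt_hfun_div_atTop (α := α) (β := β)).const_mul 2)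
      (by norm_num)
  refine h.congr' ?_
  filter_upwards [eventually_ne_atTop 0] with x hx
  rw [epssph_eq_div_sqrt_hfun]
  field_simp
  ring

end

theorem lamsph_epssph_monotonicity_general (α β : ℝ) (hα0 : 0 ≤ α) (hα1 : α < 1)
    (xph : ℝ)
    (hph1 : 1 + Real.sqrt (1 - α ^ 2) < xph) (hph2 : hfun α β xph = 0)
    (hph4 : ∀ x : ℝ, xph < x → 0 < hfun α β x)
    (xms : ℝ)
    (hms1 : xph < xms)
    (hms3 : ∀ x : ℝ, xph ≤ x → x < xms → Gfun α β x < 0)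
    (hms4 : ∀ x : ℝ, xms < x → 0 < Gfun α β x) :
    StrictAntiOn (lamsph α β) (Set.Ioo xph xms) ∧
    StrictMonoOn (lamsph α β) (Set.Ioi xms) ∧
    Tendsto (lamsph α β) (𝓝[>] xph) atTop ∧
    Tendsto (lamsph α β) atTop atTop ∧
    StrictAntiOn (epssph α β) (Set.Ioo xph xms) ∧
    StrictMonoOn (epssph α β) (Set.Ioi xms) ∧
    Tendsto (epssph α β) (𝓝[>] xph) atTop ∧
    Tendsto (epssph α β) atTop (𝓝 1) ∧
    (∀ x : ℝ, xph < x → lamsph α β xms ≤ lamsph α β x) ∧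
    (∀ x : ℝ, xph < x → epssph α β xms ≤ epssph α β x) ∧
    (∀ x : ℝ, xms < x → epssph α β x < 1) := by
  have hxph : 1 < xph := (le_add_of_nonneg_right (sqrt_nonneg _)).trans_lt hph1
  have hα : ∀ x, xph < x → α ^ 2 < x := fun x hx => by nlinarith
  have hneg : ∀ x, xph < x → x < xms → Gfun α β x < 0 := fun x hx => hms3 x hx.le
  obtain ⟨lam_anti, lam_mono⟩ := strictAntiOn_Ioc_and_strictMonoOn_Ici_of_hasDerivAt
    (fun x hx => exists_pos_hasDerivAt_lamsph (hα x hx) (hph4 x hx)) hneg hms4 hms1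
  obtain ⟨eps_anti, eps_mono⟩ := strictAntiOn_Ioc_and_strictMonoOn_Ici_of_hasDerivAt
    (fun x hx => exists_pos_hasDerivAt_epssph (by linarith) (hα x hx) (hph4 x hx)) hneg hms4 hms1
  have lam_ph : Tendsto (lamsph α β) (𝓝[>] xph) atTop :=
    tendsto_div_sqrt_hfun_nhdsGT hph2 hph4 (by fun_prop)
      (mul_pos (by linarith) (sub_pos.2 (mul_lt_sqrt_sub_sq_mul_one_sub_sq (by nlinarith))))
  have eps_ph : Tendsto (epssph α β) (𝓝[>] xph) atTop := by
    rw [epssph_eq_div_sqrt_hfun]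
    refine tendsto_div_sqrt_hfun_nhdsGT hph2 hph4 ?_ ?_
    · fun_prop (disch := positivity)
    · rw [hph2, zero_add]
      exact div_pos (mul_pos (by linarith) (by linarith)) (by linarith)
  have lam_min := isMinOn_Ioi_of_strictAntiOn_Ioc_of_strictMonoOn_Ici lam_anti lam_mono hms1
  have eps_min := isMinOn_Ioi_of_strictAntiOn_Ioc_of_strictMonoOn_Ici eps_anti eps_mono hms1
  exact ⟨lam_anti.mono Ioo_subset_Ioc_self, lam_mono.mono Ioi_subset_Ici_self, lam_ph,
    tendsto_lamsph_atTop, eps_anti.mono Ioo_subset_Ioc_self, eps_mono.mono Ioi_subset_Ici_self,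
    eps_ph, tendsto_epssph_atTop, isMinOn_iff.1 lam_min, isMinOn_iff.1 eps_min,
    fun x hx => eps_mono.lt_of_tendsto_atTop tendsto_epssph_atTop hx.le⟩

/-- `λ_{sph}` and `ε_{sph}` are strictly decreasing on `(x_{ph}, x_{ms})` and
strictly increasing on `(x_{ms}, ∞)`, with `λ_{sph} → ∞` at both ends,
`ε_{sph} → ∞` as `x → x_{ph}⁺` and `ε_{sph} → 1` as `x → ∞`.  In particular
`λ_{ms} = λ_{sph}(x_{ms})` and `ε_{ms} = ε_{sph}(x_{ms})` are the global minima
on `(x_{ph}, ∞)`, and `ε_{sph}(x) < 1` for all `x > x_{ms}`. -/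
theorem lamsph_epssph_monotonicity (α β : ℝ) (hα0 : 0 ≤ α) (hα1 : α < 1)
    (hβ0 : -1 ≤ β) (hβ1 : β ≤ 1)
    (xph : ℝ)
    (hph1 : 1 + Real.sqrt (1 - α ^ 2) < xph) (hph2 : hfun α β xph = 0)
    (hph3 : ∀ x : ℝ, 1 + Real.sqrt (1 - α ^ 2) < x → x < xph → hfun α β x < 0)
    (hph4 : ∀ x : ℝ, xph < x → 0 < hfun α β x)
    (xms : ℝ)
    (hms1 : xph < xms) (hms2 : Gfun α β xms = 0)
    (hms3 : ∀ x : ℝ, xph ≤ x → x < xms → Gfun α β x < 0)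
    (hms4 : ∀ x : ℝ, xms < x → 0 < Gfun α β x) :
    StrictAntiOn (lamsph α β) (Set.Ioo xph xms) ∧
    StrictMonoOn (lamsph α β) (Set.Ioi xms) ∧
    Tendsto (lamsph α β) (𝓝[>] xph) atTop ∧
    Tendsto (lamsph α β) atTop atTop ∧
    StrictAntiOn (epssph α β) (Set.Ioo xph xms) ∧
    StrictMonoOn (epssph α β) (Set.Ioi xms) ∧
    Tendsto (epssph α β) (𝓝[>] xph) atTop ∧
    Tendsto (epssph α β) atTop (𝓝 1) ∧
    (∀ x : ℝ, xph < x → lamsph α β xms ≤ lamsph α β x) ∧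
    (∀ x : ℝ, xph < x → epssph α β xms ≤ epssph α β x) ∧
    (∀ x : ℝ, xms < x → epssph α β x < 1) :=
  lamsph_epssph_monotonicity_general α β hα0 hα1 xph hph1 hph2 hph4 xms hms1 hms3 hms4

end
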